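/- Let C' be the simple graph on vertex set {1,2,...,11} whose edges are those of the basic block B on {1,...,7} (edge set {12,14,15,17,23,24,25,26,27,34,35,45,46,47,67}) together with the 4-cycle edges {8,9},{9,10},{10,11},{8,11} and the attachment edges {1,8},{7,11}. Then: (i) every legal 2-coloring c of C' with c(8) = white satisfies c(11) = white and the vertices 9 and 10 are not both white; and (ii) for every assignment of colors from {white, gray} to vertices 9 and 10 in which they are not both white, the 2-coloring whose gray class is {1,3,5,6,7} together with those of 9,10 colored gray is a legal 2-coloring of C'. -/

import Mathlib

/-- A set `U` of vertices of a simple graph `G` induces a linear forest: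
the induced subgraph is acyclic and every vertex of `U` has at most 2 neighbors in `U`. -/
def InducesLinearForest {V : Type*} (G : SimpleGraph V) (U : Set V) : Prop :=
  (G.induce U).IsAcyclic ∧ ∀ v ∈ U, {w | w ∈ U ∧ G.Adj v w}.ncard ≤ 2

/-- A legal 2-coloring of `G` (`true` = gray, `false` = white): each color class
induces a linear forest. -/
def IsLegal2Coloring {V : Type*} (G : SimpleGraph V) (c : V → Bool) : Prop :=
  InducesLinearForest G {v | c v = true} ∧ InducesLinearForest G {v | c v = false}

/-- The edge set of the basic building block `B`. -/
def BEdges : Set (ℕ × ℕ) :=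
  {(1,2),(1,4),(1,5),(1,7),(2,3),(2,4),(2,5),(2,6),(2,7),
   (3,4),(3,5),(4,5),(4,6),(4,7),(6,7)}

/-- Vertex set {1, …, 11}. -/
abbrev V11 : Type := {m : ℕ // m ∈ Finset.Icc 1 11}

/-- The edge set of the two-variable clause gadget `C'`: the block `B` together with
the 4-cycle 8–9–10–11–8 and the attachment edges {1,8} and {7,11}. -/
def C'Edges : Set (ℕ × ℕ) :=
  BEdges ∪ {(8,9),(9,10),(10,11),(8,11),(1,8),(7,11)}

/-- The two-variable clause gadget `C'` on vertex set {1, …, 11}. -/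
def C'Graph : SimpleGraph V11 :=
  SimpleGraph.fromRel (fun u v => (u.val, v.val) ∈ C'Edges)

/-
In `B` the adjacent vertices 2 and 4 have the five common neighbours 1, 3, 5, 6, 7. If 2 and 4
had different colours, each of them could have at most two of these neighbours in its own colour,
which accounts for only four of the five; so 2 and 4 share a colour and, by the triangles
2-4-x, the path 3-5-1-7-6 gets the other colour. Then 1 and 7 already have two neighbours of their
colour, so 8 and 11 both take the colour of 2 and 4, and the 4-cycle 8-9-10-11 forbids 9 and 10
from taking it as well. For (ii) every colour class lies in a disjoint union of paths; a set
labelled injectively by `ℕ` with consecutive labels on edges is a linear forest, because every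
edge `n — n + 1` of the path on `ℕ` is a bridge.
-/

namespace SimpleGraph

theorem isAcyclic_hasse_nat : (hasse ℕ).IsAcyclic := by
  refine isAcyclic_iff_forall_adj_isBridge.mpr ?_
  suffices h : ∀ n, (hasse ℕ).IsBridge s(n, n + 1) by
    intro v w hvw
    rcases (hasse_adj.mp hvw).imp Nat.covBy_iff_add_one_eq.mp Nat.covBy_iff_add_one_eq.mp
      with rfl | rfl
    · exact h v
    · rw [Sym2.eq_swap]; exact h w
  rintro n ⟨p⟩
  obtain ⟨d, -, hfst, hsnd⟩ := p.exists_boundary_dart {x | x ≤ n} (le_refl n) (by simp)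
  have hd := d.adj
  simp only [deleteEdges_adj, hasse_adj, Nat.covBy_iff_add_one_eq, Set.mem_singleton_iff,
    Set.mem_ofPred_eq] at hd hfst hsnd
  obtain ⟨hd, hne⟩ := hd
  have : d.fst = n ∧ d.snd = n + 1 := by omega
  exact hne (by rw [this.1, this.2])

end SimpleGraph

theorem Bool.eq_of_ne_of_ne {a b c : Bool} (ha : a ≠ c) (hb : b ≠ c) : a = b :=
  (Bool.eq_not.mpr ha).trans (Bool.eq_not.mpr hb).symm

open SimpleGraph

variable {V : Type*} {G : SimpleGraph V}

theorem inducesLinearForest_of_labeling {U : Set V} (f : V → ℕ) (hinj : U.InjOn f)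
    (hadj : ∀ u ∈ U, ∀ w ∈ U, G.Adj u w → f w = f u + 1 ∨ f u = f w + 1) :
    InducesLinearForest G U := by
  have hasse_of_adj : ∀ u ∈ U, ∀ w ∈ U, G.Adj u w → (hasse ℕ).Adj (f u) (f w) :=
    fun u hu w hw huw => by
      simpa [hasse_adj, Nat.covBy_iff_add_one_eq, eq_comm] using hadj u hu w hw huw
  let φ : G.induce U →g hasse ℕ := ⟨fun x => f x, fun {x y} hxy => hasse_of_adj _ x.2 _ y.2 hxy⟩
  refine ⟨isAcyclic_hasse_nat.comap φ fun x y hxy => Subtype.ext (hinj x.2 y.2 hxy), fun v hv => ?_⟩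
  calc {w | w ∈ U ∧ G.Adj v w}.ncard ≤ ({f v + 1, f v - 1} : Set ℕ).ncard := by
        refine Set.ncard_le_ncard_of_injOn f (fun w ⟨hw, hvw⟩ => ?_) (hinj.mono fun _ h => h.1)
        have := hadj v hv w hw hvw
        simp only [Set.mem_insert_iff, Set.mem_singleton_iff]
        omega
    _ ≤ 2 := (Set.ncard_insert_le _ _).trans (by simp)

theorem InducesLinearForest.mono [Finite V] {U W : Set V} (h : InducesLinearForest G W)
    (hUW : U ⊆ W) : InducesLinearForest G U := by
  refine ⟨h.1.embedding (G.induceHomOfLE hUW), fun v hv => ?_⟩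
  exact (Set.ncard_le_ncard fun _ hw => And.imp_left (@hUW _) hw).trans (h.2 v (hUW hv))

variable {c : V → Bool}

theorem IsLegal2Coloring.inducesLinearForest (h : IsLegal2Coloring G c) (b : Bool) :
    InducesLinearForest G {v | c v = b} := by
  cases b
  exacts [h.2, h.1]

theorem IsLegal2Coloring.ne_of_triangle (h : IsLegal2Coloring G c) {a b d : V}
    (hab : G.Adj a b) (hbd : G.Adj b d) (hda : G.Adj d a) (hb : c b = c a) : c d ≠ c a := by
  intro hd
  classical
  refine (h.inducesLinearForest (c a)).1.cliqueFree le_rfl {⟨a, rfl⟩, ⟨b, hb⟩, ⟨d, hd⟩} ?_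
  exact is3Clique_triple_iff.mpr ⟨hab, hda.symm, hbd⟩

theorem IsLegal2Coloring.ne_of_square (h : IsLegal2Coloring G c) {a b d e : V}
    (hab : G.Adj a b) (hbd : G.Adj b d) (hde : G.Adj d e) (hea : G.Adj e a)
    (had : a ≠ d) (hbe : b ≠ e) (hb : c b = c a) (hd : c d = c a) : c e ≠ c a := by
  intro he
  let H := G.induce {v | c v = c a}
  have hpath : (Walk.cons (show H.Adj ⟨a, rfl⟩ ⟨b, hb⟩ from hab)
      (.cons (show H.Adj ⟨b, hb⟩ ⟨d, hd⟩ from hbd)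
        (.cons (show H.Adj ⟨d, hd⟩ ⟨e, he⟩ from hde) .nil))).IsPath := by
    simp [Walk.cons_isPath_iff, hab.ne, hbd.ne, hde.ne, hea.ne.symm, had, hbe]
  have hsnd := (h.inducesLinearForest (c a)).1.eq_snd_of_adj_start hpath
    (show H.Adj ⟨a, rfl⟩ ⟨e, he⟩ from hea.symm) (by simp)
  simp at hsnd
  exact hbe hsnd.symm

theorem IsLegal2Coloring.card_le_two [Finite V] (h : IsLegal2Coloring G c) {v : V}
    {S : Finset V} (hS : ∀ w ∈ S, G.Adj v w ∧ c w = c v) : S.card ≤ 2 := by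
  rw [← Set.ncard_coe_finset]
  exact (Set.ncard_le_ncard fun w hw => (hS w hw).symm).trans
    ((h.inducesLinearForest (c v)).2 v rfl)

theorem IsLegal2Coloring.ne_of_three_neighbors [Finite V] (h : IsLegal2Coloring G c)
    {v a b d : V} (hab : a ≠ b) (had : a ≠ d) (hbd : b ≠ d)
    (hva : G.Adj v a) (hvb : G.Adj v b) (hvd : G.Adj v d) (ha : c a = c v) (hb : c b = c v) :
    c d ≠ c v := by
  classical
  intro hd
  have hle := h.card_le_two (v := v) (S := {a, b, d}) (by simp [*])
  rw [Finset.card_eq_three.mpr ⟨a, b, d, hab, had, hbd, rfl⟩] at hle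
  omega

theorem IsLegal2Coloring.eq_of_four_lt_card [Finite V] (h : IsLegal2Coloring G c) {u v : V}
    {S : Finset V} (hS : ∀ w ∈ S, G.Adj u w ∧ G.Adj v w) (hcard : 4 < S.card) : c u = c v := by
  classical
  by_contra huv
  have hu := h.card_le_two (v := u) (S := S.filter (c · = c u)) fun w hw => by
    simp only [Finset.mem_filter] at hw
    exact ⟨(hS w hw.1).1, hw.2⟩
  have hv := h.card_le_two (v := v) (S := S.filter fun w => ¬c w = c u) fun w hw => by
    simp only [Finset.mem_filter] at hw
    exact ⟨(hS w hw.1).2, Bool.eq_of_ne_of_ne hw.2 (Ne.symm huv)⟩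
  have := S.card_filter_add_card_filter_not (c · = c u)
  omega

instance : DecidablePred (· ∈ BEdges) := fun p => by
  unfold BEdges; infer_instance

instance : DecidablePred (· ∈ C'Edges) := fun p => by
  unfold C'Edges; exact Set.decidableUnion _ _ _

instance : DecidableRel C'Graph.Adj := fun u v =>
  decidable_of_iff _ (SimpleGraph.fromRel_adj _ u v).symm

namespace C'Graph

def vtx (n : ℕ) (hn : n ∈ Finset.Icc 1 11 := by decide) : V11 := ⟨n, hn⟩

theorem color_eight_eq_color_eleven {c : V11 → Bool} (h : IsLegal2Coloring C'Graph c) :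
    c (vtx 8) = c (vtx 11) := by
  have h24 : c (vtx 2) = c (vtx 4) :=
    h.eq_of_four_lt_card (S := {vtx 1, vtx 3, vtx 5, vtx 6, vtx 7}) (by decide) (by decide)
  have ne_two : ∀ x, C'Graph.Adj (vtx 2) x → C'Graph.Adj (vtx 4) x → c x ≠ c (vtx 2) :=
    fun x h2 h4 => h.ne_of_triangle (by decide) h4 h2.symm h24.symm
  have h5 : c (vtx 5) = c (vtx 1) :=
    Bool.eq_of_ne_of_ne (ne_two _ (by decide) (by decide)) (ne_two _ (by decide) (by decide))
  have h6 : c (vtx 6) = c (vtx 1) :=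
    Bool.eq_of_ne_of_ne (ne_two _ (by decide) (by decide)) (ne_two _ (by decide) (by decide))
  have h7 : c (vtx 7) = c (vtx 1) :=
    Bool.eq_of_ne_of_ne (ne_two _ (by decide) (by decide)) (ne_two _ (by decide) (by decide))
  have h8 : c (vtx 8) ≠ c (vtx 1) := h.ne_of_three_neighbors (a := vtx 5) (b := vtx 7)
    (by decide) (by decide) (by decide) (by decide) (by decide) (by decide) h5 h7
  have h11 : c (vtx 11) ≠ c (vtx 1) := h7 ▸ h.ne_of_three_neighbors (a := vtx 1) (b := vtx 6)
    (by decide) (by decide) (by decide) (by decide) (by decide) (by decide) h7.symm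
    (h6.trans h7.symm)
  exact Bool.eq_of_ne_of_ne h8 h11

-- A vertex is labelled by its position in `l`; an entry `0`, which is no vertex, separates paths.
theorem inducesLinearForest_of_idxOf (l : List ℕ)
    (hadj : ∀ u w : V11, u.val ∈ l → w.val ∈ l → C'Graph.Adj u w →
      l.idxOf w.val = l.idxOf u.val + 1 ∨ l.idxOf u.val = l.idxOf w.val + 1) :
    InducesLinearForest C'Graph {v | v.val ∈ l} :=
  inducesLinearForest_of_labeling (fun v => l.idxOf v.val)
    (fun _ hu _ _ huw => Subtype.ext ((List.idxOf_inj hu).mp huw))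
    fun u hu w hw => hadj u w hu hw

theorem isLegal2Coloring_of_colors {c : V11 → Bool}
    (hgray : ∀ v : V11, v.val ∈ ({1,3,5,6,7} : Set ℕ) → c v = true)
    (hwhite : ∀ v : V11, v.val ∈ ({2,4,8,11} : Set ℕ) → c v = false)
    (h910 : ¬ (c (vtx 9) = false ∧ c (vtx 10) = false)) :
    IsLegal2Coloring C'Graph c := by
  have gray_val : ∀ v : V11, c v = true → v.val ∈ ({1,3,5,6,7,9,10} : Set ℕ) := by
    rintro ⟨n, hn⟩ hv
    by_contra hnot
    have := hwhite ⟨n, hn⟩ (by simp at hn hnot ⊢; omega)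
    simp_all
  have white_val : ∀ v : V11, c v = false → v.val ∈ ({2,4,8,9,10,11} : Set ℕ) := by
    rintro ⟨n, hn⟩ hv
    by_contra hnot
    have := hgray ⟨n, hn⟩ (by simp at hn hnot ⊢; omega)
    simp_all
  refine ⟨(inducesLinearForest_of_idxOf [3,5,1,7,6,0,9,10] (by decide)).mono fun v hv => ?_, ?_⟩
  · have := gray_val v hv
    simp at this ⊢
    omega
  have h9or10 : c (vtx 9) = true ∨ c (vtx 10) = true := by
    simpa only [not_and_or, Bool.not_eq_false] using h910
  rcases h9or10 with h9 | h10
  · refine (inducesLinearForest_of_idxOf [2,4,0,8,11,10] (by decide)).mono fun v hv => ?_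
    have h9' : v ≠ vtx 9 := by rintro rfl; exact nomatch h9.symm.trans hv
    have := white_val v hv
    simp [vtx, Subtype.ext_iff] at this h9' ⊢
    omega
  · refine (inducesLinearForest_of_idxOf [2,4,0,9,8,11] (by decide)).mono fun v hv => ?_
    have h10' : v ≠ vtx 10 := by rintro rfl; exact nomatch h10.symm.trans hv
    have := white_val v hv
    simp [vtx, Subtype.ext_iff] at this h10' ⊢
    omega

end C'Graph

/-- (i) Every legal 2-coloring `c` of `C'` with `c 8 = white` satisfies `c 11 = white`
and the vertices 9 and 10 are not both white; and (ii) for every assignment of colors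
to vertices 9 and 10 in which they are not both white, the 2-coloring whose gray class
is {1,3,5,6,7} together with the gray ones among 9, 10 is a legal 2-coloring of `C'`. -/
theorem stmt4 :
    (∀ c : V11 → Bool, IsLegal2Coloring C'Graph c → c ⟨8, by decide⟩ = false →
      c ⟨11, by decide⟩ = false ∧
      ¬ (c ⟨9, by decide⟩ = false ∧ c ⟨10, by decide⟩ = false)) ∧
    (∀ c : V11 → Bool,
      (∀ v : V11, v.val ∈ ({1,3,5,6,7} : Set ℕ) → c v = true) →
      (∀ v : V11, v.val ∈ ({2,4,8,11} : Set ℕ) → c v = false) →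
      ¬ (c ⟨9, by decide⟩ = false ∧ c ⟨10, by decide⟩ = false) →
      IsLegal2Coloring C'Graph c) := by
  refine ⟨fun c hc h8 => ?_, fun c => C'Graph.isLegal2Coloring_of_colors⟩
  have h11 : c ⟨11, by decide⟩ = false := (C'Graph.color_eight_eq_color_eleven hc).symm.trans h8
  refine ⟨h11, fun ⟨h9, h10⟩ => hc.ne_of_square (a := C'Graph.vtx 8) (b := C'Graph.vtx 9)
    (d := C'Graph.vtx 10) (e := C'Graph.vtx 11) (by decide) (by decide) (by decide) (by decide)
    (by decide) (by decide) (h9.trans h8.symm) (h10.trans h8.symm) (h11.trans h8.symm)⟩
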